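/- Closed choice C_N is Weihrauch equivalent to Bound : ⊆ O(N) ⇉ N, where n ∈ Bound(U) iff n ≥ m for all m ∈ U, with domain the bounded nonempty open subsets of N. -/

import Mathlib

/- Common background: type-two computability on Baire space, represented spaces
(representations as functional relations), Weihrauch reducibility, Cantor space,
Martin-Löf tests, Martin-Löf randomness, and the basic multivalued functions
`C_ℕ`, `d_MLR`, `LAY`, the layer map and layerwise computability. -/

namespace WL

abbrev Baire : Type := ℕ → ℕ
abbrev Cantor : Type := ℕ → Bool

/-- The initial segment of length `m` of a point of Baire space. -/
def initSeg (p : Baire) (m : ℕ) : List ℕ := (List.range m).map p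

/-- `l` is a prefix of the sequence `p`. -/
def PrefixOfFun (l : List ℕ) (p : Baire) : Prop := ∀ i : Fin l.length, l.get i = p i

/-- `F` is a computable (partial) function on Baire space, with domain (at least) `D`:
there is a computable monotone word function producing, on longer and longer prefixes of
an input `p ∈ D`, longer and longer prefixes of `F p`. -/
def ComputableOn (F : Baire → Baire) (D : Set Baire) : Prop :=
  ∃ φ : List ℕ → List ℕ, Computable φ ∧ (∀ l l' : List ℕ, l <+: l' → φ l <+: φ l') ∧
    ∀ p ∈ D, (∀ m, PrefixOfFun (φ (initSeg p m)) (F p)) ∧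
      ∀ n, ∃ m, n ≤ (φ (initSeg p m)).length

/-- Pairing on Baire space. -/
def pairB (p q : Baire) : Baire := fun n => if n % 2 = 0 then p (n / 2) else q (n / 2)

def evens (p : Baire) : Baire := fun n => p (2 * n)

def odds (p : Baire) : Baire := fun n => p (2 * n + 1)

/-- `F` is a realizer of the multivalued function `f`, w.r.t. representations
`δX`, `δY` (given as functional relations between names and points). -/
def Realizes {X Y : Type} (δX : Baire → X → Prop) (δY : Baire → Y → Prop)
    (f : X → Set Y) (F : Baire → Baire) : Prop :=
  ∀ p x, δX p x → (f x).Nonempty → ∃ y, δY (F p) y ∧ y ∈ f x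

/-- The names of points in the domain of the multivalued function `f`. -/
def domNames {X Y : Type} (δX : Baire → X → Prop) (f : X → Set Y) : Set Baire :=
  {p | ∃ x, δX p x ∧ (f x).Nonempty}

/-- Weihrauch reducibility `f ≤_W g`. -/
def WRed {X Y Z W : Type} (δX : Baire → X → Prop) (δY : Baire → Y → Prop)
    (δZ : Baire → Z → Prop) (δW : Baire → W → Prop)
    (f : X → Set Y) (g : Z → Set W) : Prop :=
  ∃ H K : Baire → Baire, ComputableOn H (domNames δX f) ∧
    ∀ G : Baire → Baire, Realizes δZ δW g G →
      ComputableOn K {r | ∃ p ∈ domNames δX f, r = pairB p (G (H p))} ∧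
      Realizes δX δY f fun p => K (pairB p (G (H p)))

/-- Weihrauch equivalence. -/
def WEquiv {X Y Z W : Type} (δX : Baire → X → Prop) (δY : Baire → Y → Prop)
    (δZ : Baire → Z → Prop) (δW : Baire → W → Prop)
    (f : X → Set Y) (g : Z → Set W) : Prop :=
  WRed δX δY δZ δW f g ∧ WRed δZ δW δX δY g f

/-- The multivalued function `f` is computable. -/
def ComputableMF {X Y : Type} (δX : Baire → X → Prop) (δY : Baire → Y → Prop)
    (f : X → Set Y) : Prop :=
  ∃ F : Baire → Baire, ComputableOn F (domNames δX f) ∧ Realizes δX δY f F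

/-- Representation of `ℕ`. -/
def repNat : Baire → ℕ → Prop := fun p n => p 0 = n

/-- Representation of Baire space. -/
def repBaire : Baire → Baire → Prop := fun p q => p = q

/-- Representation of Cantor space. -/
def repCantor : Baire → Cantor → Prop := fun p x => ∀ n, p n = if x n then 1 else 0

/-- Representation of closed subsets of `ℕ` by enumerations of their complements. -/
def repClosedNat : Baire → Set ℕ → Prop := fun p A => ∀ n, n ∈ A ↔ ¬ ∃ i, p i = n + 1

/-- Representation of open subsets of `ℕ` by enumerations. -/
def repOpenNat : Baire → Set ℕ → Prop := fun p A => ∀ n, n ∈ A ↔ ∃ i, p i = n + 1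

/-- Product representation. -/
def prodRep {X Z : Type} (δX : Baire → X → Prop) (δZ : Baire → Z → Prop) :
    Baire → X × Z → Prop := fun p xz => δX (evens p) xz.1 ∧ δZ (odds p) xz.2

/-- Representation of countable powers. -/
def seqRep {X : Type} (δX : Baire → X → Prop) : Baire → (ℕ → X) → Prop :=
  fun p xs => ∀ i, δX (fun n => p (Nat.pair i n)) (xs i)

/-- Product of multivalued functions. -/
def prodMF {X Y Z W : Type} (f : X → Set Y) (g : Z → Set W) : X × Z → Set (Y × W) :=
  fun xz => f xz.1 ×ˢ g xz.2

/-- Composition of multivalued functions (with the usual domain condition). -/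
def compMF {X Y Z : Type} (g : Y → Set Z) (f : X → Set Y) : X → Set Z :=
  fun x => {z | (∀ y ∈ f x, (g y).Nonempty) ∧ ∃ y ∈ f x, z ∈ g y}

/-- The cylinder of a finite binary word. -/
def cyl (w : List Bool) : Set Cantor := {x | ∀ i : Fin w.length, x i = w.get i}

/-- Decoding a natural number as a finite binary word. -/
def wordOf (k : ℕ) : List Bool := (Encodable.decode (α := List Bool) k).getD []

/-- The open subset of Cantor space enumerated by `p` (as a union of cylinders). -/
def openOf (p : Baire) : Set Cantor :=
  ⋃ i, if p i = 0 then (∅ : Set Cantor) else cyl (wordOf (p i - 1))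

/-- Representation of open subsets of Cantor space. -/
def repOpenCantor : Baire → Set Cantor → Prop := fun p U => U = openOf p

/-- Representation of closed subsets of Cantor space. -/
def repClosedCantor : Baire → Set Cantor → Prop := fun p A => A = (openOf p)ᶜ

/-- The number of binary words of length `n` whose cylinder is contained in `U`. -/
noncomputable def cylCount (U : Set Cantor) (n : ℕ) : ℕ :=
  Nat.card {w : Fin n → Bool // cyl (List.ofFn w) ⊆ U}

/-- For an open set `U`, `lebLe U i` expresses `λ(U) ≤ 2^{-i}` for the uniform measure. -/
def lebLe (U : Set Cantor) (i : ℕ) : Prop := ∀ n, 2 ^ i * cylCount U n ≤ 2 ^ n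

/-- A Martin-Löf test: a computable sequence of (codes of) open sets `U_i` with
`λ(U_i) ≤ 2^{-i}`. -/
structure MLTest where
  e : ℕ → ℕ → ℕ
  comp : Computable₂ e
  meas : ∀ i, lebLe (openOf (e i)) i

/-- The `i`-th level of a Martin-Löf test. -/
def MLTest.U (T : MLTest) (i : ℕ) : Set Cantor := openOf (T.e i)

/-- Martin-Löf randomness. -/
def MLRandom (x : Cantor) : Prop := ∀ T : MLTest, ∃ i, x ∉ T.U i

/-- A universal Martin-Löf test. -/
def MLTest.Universal (T : MLTest) : Prop := ∀ T' : MLTest, (⋂ i, T'.U i) ⊆ ⋂ i, T.U i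

/-- Closed choice on the naturals, as a multivalued function on `A(ℕ)`. -/
def CN : Set ℕ → Set ℕ := fun A => A

/-- `d_MLR : MLR → {1}`. -/
def dMLR : Cantor → Set ℕ := fun x => {n | MLRandom x ∧ n = 1}

/-- The degree `LAY = C_ℕ × d_MLR`. -/
def LAY : Set ℕ × Cantor → Set (ℕ × ℕ) := prodMF CN dMLR

abbrev repLAYin : Baire → Set ℕ × Cantor → Prop := prodRep repClosedNat repCantor
abbrev repPairNat : Baire → ℕ × ℕ → Prop := prodRep repNat repNat

/-- The layer map of a Martin-Löf test: `n ∈ Lay T x` iff `x ∉ U_n`. -/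
def Lay (T : MLTest) : Cantor → Set ℕ := fun x => {n | MLRandom x ∧ x ∉ T.U n}

/-- The randomness deficiency map: `RD T x = min {n | x ∉ U_n}`. -/
def RD (T : MLTest) : Cantor → Set ℕ := fun x => {n | MLRandom x ∧ IsLeast {m | x ∉ T.U m} n}

/-- `f : MLR ⇉ X` is layerwise computable w.r.t. the test `T`: some computable
`g(p, k)` produces a value in `f p` whenever `p ∉ U_k`. -/
def LayerwiseComputable (T : MLTest) {X : Type} (δX : Baire → X → Prop)
    (f : Cantor → Set X) : Prop :=
  ∃ G : Baire → Baire,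
    ComputableOn G {r | ∃ p x k, repCantor p x ∧ x ∉ T.U k ∧ (f x).Nonempty ∧
      r = pairB p fun _ => k} ∧
    ∀ p x k, repCantor p x → x ∉ T.U k → (f x).Nonempty →
      ∃ y, δX (G (pairB p fun _ => k)) y ∧ y ∈ f x

/-- Layerwise computability for multivalued functions with an additional input. -/
def LayerwiseComputable₂ (T : MLTest) {I X : Type} (δI : Baire → I → Prop)
    (δX : Baire → X → Prop) (f : Cantor × I → Set X) : Prop :=
  ∃ G : Baire → Baire,
    ComputableOn G {r | ∃ p q x i k, repCantor p x ∧ δI q i ∧ x ∉ T.U k ∧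
      (f (x, i)).Nonempty ∧ r = pairB (pairB p q) fun _ => k} ∧
    ∀ p q x i k, repCantor p x → δI q i → x ∉ T.U k → (f (x, i)).Nonempty →
      ∃ y, δX (G (pairB (pairB p q) fun _ => k)) y ∧ y ∈ f (x, i)

/-- `Σ_{i<|w|} (2 w(i) - 1)`: the signed count of a binary word. -/
def signedSum (w : List Bool) : ℤ := (w.count true : ℤ) - (w.count false : ℤ)

/-- The prefix of length `n` of a point of Cantor space. -/
def initBits (x : Cantor) (n : ℕ) : List Bool := List.ofFn fun i : Fin n => x i

/-- `Bound : ⊆ O(ℕ) ⇉ ℕ`: `n ∈ Bound U` iff `n` bounds the nonempty enumerated set `U`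
(so the domain consists of the bounded nonempty open subsets of `ℕ`). -/
def BoundN : Set ℕ → Set ℕ := fun U => {n | U.Nonempty ∧ ∀ m ∈ U, m ≤ n}

/-! For `C_ℕ ≤_W Bound`: given a name of a nonempty closed `A ⊆ ℕ`, the least number not yet
removed at stage `s` is a guess for `min A` that changes only finitely often. The stages at which
it changes form a bounded enumerable set, and at any upper bound of that set the guess has
already stabilised at `min A`.

For `Bound ≤_W C_ℕ`: the upper bounds of an enumerated set `U` form a closed set, since its
complement `{n | ∃ m ∈ U, n < m}` is enumerable from `U`; every element of it is a valid answer. -/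

open Filter

lemma initSeg_length (p : Baire) (m : ℕ) : (initSeg p m).length = m := by simp [initSeg]

lemma mem_initSeg {p : Baire} {m n : ℕ} : n ∈ initSeg p m ↔ ∃ i < m, p i = n := by
  simp [initSeg]

lemma initSeg_getI {p : Baire} {m i : ℕ} (h : i < m) : (initSeg p m).getI i = p i := by
  rw [List.getI_eq_getElem _ (by rwa [initSeg_length])]
  simp [initSeg]

lemma initSeg_eq_initSeg_iff {p q : Baire} {m : ℕ} :
    initSeg p m = initSeg q m ↔ ∀ i < m, p i = q i := by
  simp [initSeg, List.map_inj_left]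

lemma initSeg_prefix_initSeg (p : Baire) {m m' : ℕ} (h : m ≤ m') :
    initSeg p m <+: initSeg p m' := by
  have : (initSeg p m').take m = initSeg p m := by
    simp [initSeg, ← List.map_take, List.take_range, Nat.min_eq_left h]
  exact this ▸ List.take_prefix _ _

lemma initSeg_getI_of_prefix {l l' : List ℕ} (h : l <+: l') :
    initSeg (fun i => l'.getI i) l.length = l := by
  refine List.ext_getElem (initSeg_length _ _) fun i hi _ => ?_
  rw [initSeg_length] at hi
  simp [initSeg, List.getI_eq_getElem _ (lt_of_lt_of_le hi h.length_le), h.getElem]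

lemma getI_eq_getI_of_prefix {l l' : List ℕ} (h : l <+: l') {i : ℕ} (hi : i < l.length) :
    l.getI i = l'.getI i := by
  rw [List.getI_eq_getElem _ hi, List.getI_eq_getElem _ (hi.trans_le h.length_le), h.getElem hi]

lemma prefixOfFun_initSeg (p : Baire) (m : ℕ) : PrefixOfFun (initSeg p m) p := by
  rintro ⟨i, hi⟩
  simp [initSeg, List.get_eq_getElem]

lemma evens_pairB (p q : Baire) : evens (pairB p q) = p := by
  funext n
  simp [evens, pairB]

lemma pairB_one (p q : Baire) : pairB p q 1 = q 0 := by
  simp [pairB]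

lemma ComputableOn.mono {F : Baire → Baire} {D D' : Set Baire} (hF : ComputableOn F D)
    (h : D' ⊆ D) : ComputableOn F D' := by
  obtain ⟨φ, hφ, hmono, hD⟩ := hF
  exact ⟨φ, hφ, hmono, fun p hp => hD p (h hp)⟩

lemma computableOn_of_causal {F : Baire → Baire} {D : Set Baire}
    (hcausal : ∀ p q s, (∀ i ≤ s, p i = q i) → F p s = F q s)
    (hprim : Primrec₂ fun (l : List ℕ) s => F (fun i => l.getI i) s) :
    ComputableOn F D := by
  set φ : List ℕ → List ℕ := fun l => initSeg (F fun i => l.getI i) l.length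
  have hφ : ∀ p m, φ (initSeg p m) = initSeg (F p) m := fun p m => by
    simp only [φ, initSeg_length, initSeg_eq_initSeg_iff]
    exact fun s hs => hcausal _ _ _ fun i hi => initSeg_getI (by omega)
  refine ⟨φ, (Primrec.list_map (Primrec.list_range.comp Primrec.list_length) hprim).to_comp,
    fun l l' h => ?_, fun p _ => ⟨fun m => hφ p m ▸ prefixOfFun_initSeg _ _,
      fun n => ⟨n, by rw [hφ, initSeg_length]⟩⟩⟩
  have hl : φ l = initSeg (F fun i => l'.getI i) l.length := by
    rw [← initSeg_getI_of_prefix h, hφ, initSeg_length]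
  rw [hl]
  exact initSeg_prefix_initSeg _ h.length_le

/-- `c l` signals that the prefix `l` of the input is long enough to determine `f`. -/
lemma computableOn_const_of_eventually {f : Baire → ℕ} {D : Set Baire} (c : List ℕ → Prop)
    [DecidablePred c] (hc : PrimrecPred c) (hmono : ∀ l l', l <+: l' → c l → c l')
    (hev : ∀ p, ∃ m, c (initSeg p m))
    (hdet : ∀ p q m, c (initSeg p m) → initSeg p m = initSeg q m → f p = f q)
    (hprim : Primrec fun l : List ℕ => f fun i => l.getI i) :
    ComputableOn (fun p _ => f p) D := by
  set φ : List ℕ → List ℕ := fun l =>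
    if c l then initSeg (fun _ => f fun i => l.getI i) l.length else []
  have hφ : ∀ p m, c (initSeg p m) → φ (initSeg p m) = initSeg (fun _ => f p) m :=
    fun p m hm => by
      simp only [φ, if_pos hm, initSeg_length]
      congr 1
      funext
      refine (hdet _ _ _ hm ?_).symm
      exact initSeg_eq_initSeg_iff.2 fun i hi => (initSeg_getI hi).symm
  refine ⟨φ, ?_, fun l l' h => ?_, fun p _ => ⟨fun m => ?_, fun n => ?_⟩⟩
  · exact (Primrec.ite hc (Primrec.list_map (Primrec.list_range.comp Primrec.list_length)
      (hprim.comp Primrec.fst).to₂) (Primrec.const [])).to_comp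
  · by_cases hl : c l
    · set q : Baire := fun i => l'.getI i
      have hq : initSeg q l.length = l := initSeg_getI_of_prefix h
      have hq' : initSeg q l'.length = l' := initSeg_getI_of_prefix (List.prefix_refl l')
      rw [← hq] at hl
      have hl' := hmono _ _ (initSeg_prefix_initSeg q h.length_le) hl
      have key : φ (initSeg q l.length) <+: φ (initSeg q l'.length) := by
        rw [hφ q _ hl, hφ q _ hl']
        exact initSeg_prefix_initSeg _ h.length_le
      rwa [hq, hq'] at key
    · simp only [φ, if_neg hl, List.nil_prefix]
  · by_cases hm : c (initSeg p m)
    · exact hφ p m hm ▸ prefixOfFun_initSeg _ _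
    · simp only [φ, if_neg hm]
      exact fun i => i.elim0
  · obtain ⟨m, hm⟩ := hev p
    have hnm := hmono _ _ (initSeg_prefix_initSeg p (le_max_right n m)) hm
    exact ⟨max n m, by simp [hφ p _ hnm, initSeg_length]⟩

lemma wRed_repNat_of_computable {X Z : Type} {δX : Baire → X → Prop} {δZ : Baire → Z → Prop}
    {f : X → Set ℕ} {g : Z → Set ℕ} (H : Baire → Baire) (post : Baire → ℕ → ℕ)
    (hH : ComputableOn H (domNames δX f))
    (hpost : ComputableOn (fun r _ => post (evens r) (r 1)) Set.univ)
    (hred : ∀ p x, δX p x → (f x).Nonempty →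
      ∃ z, δZ (H p) z ∧ (g z).Nonempty ∧ ∀ n ∈ g z, post p n ∈ f x) :
    WRed δX repNat δZ repNat f g := by
  refine ⟨H, fun r _ => post (evens r) (r 1), hH, fun G hG =>
    ⟨hpost.mono (Set.subset_univ _), fun p x hpx hfx => ?_⟩⟩
  obtain ⟨z, hz, hgz, hsound⟩ := hred p x hpx hfx
  obtain ⟨n, hn, hng⟩ := hG (H p) z hz hgz
  refine ⟨post p n, ?_, hsound n hng⟩
  show post (evens (pairB p (G (H p)))) (pairB p (G (H p)) 1) = post p n
  rw [evens_pairB, pairB_one, hn]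

lemma exists_succ_notMem (l : List ℕ) : ∃ j, j + 1 ∉ l :=
  ⟨l.sum, fun h => by have := List.le_sum_of_mem h; omega⟩

/-- In a name of a closed set a value `j + 1` removes `j`; this is the least number not removed
by the finite part `l` of a name. -/
def leastRemaining (l : List ℕ) : ℕ := Nat.find (exists_succ_notMem l)

lemma leastRemaining_succ_notMem (l : List ℕ) : leastRemaining l + 1 ∉ l :=
  Nat.find_spec (exists_succ_notMem l)

lemma leastRemaining_le {l : List ℕ} {j : ℕ} (h : j + 1 ∉ l) : leastRemaining l ≤ j :=
  Nat.find_min' _ h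

lemma succ_mem_of_lt_leastRemaining {l : List ℕ} {j : ℕ} (h : j < leastRemaining l) :
    j + 1 ∈ l :=
  not_not.1 (Nat.find_min _ h)

lemma leastRemaining_eq_findIdx (l : List ℕ) :
    leastRemaining l = (List.range (l.sum + 1)).findIdx fun j => decide (j + 1 ∉ l) := by
  have hlt : leastRemaining l < (List.range (l.sum + 1)).length := by
    simpa [Nat.lt_succ_iff] using leastRemaining_le fun h => by
      have := List.le_sum_of_mem h; omega
  rw [eq_comm, List.findIdx_eq hlt]
  simp only [List.getElem_range, decide_eq_true_eq, decide_eq_false_iff_not, not_not]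
  exact ⟨leastRemaining_succ_notMem l, fun j hj => succ_mem_of_lt_leastRemaining hj⟩

lemma primrec_leastRemaining : Primrec leastRemaining := by
  have hsum : Primrec fun l : List ℕ => l.sum :=
    (Primrec.list_foldr Primrec.id (Primrec.const 0) (Primrec.nat_add.comp
      (Primrec.fst.comp Primrec.snd) (Primrec.snd.comp Primrec.snd)).to₂).of_eq
      fun l => List.sum_eq_foldr.symm
  have hmem : PrimrecRel fun (l : List ℕ) (j : ℕ) => j + 1 ∈ l :=
    (PrimrecRel.exists_mem_list (R := fun a j : ℕ => a = j + 1)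
      (Primrec.eq.comp Primrec.fst (Primrec.succ.comp Primrec.snd))).of_eq
      fun l j => by simp
  exact (Primrec.list_findIdx (Primrec.list_range.comp (Primrec.succ.comp hsum))
    (Primrec.not.comp hmem.decide).to₂).of_eq fun l => by simp [leastRemaining_eq_findIdx]

def minGuess (p : Baire) (s : ℕ) : ℕ := leastRemaining (initSeg p s)

lemma minGuess_congr {p q : Baire} {s : ℕ} (h : ∀ i < s, p i = q i) :
    minGuess p s = minGuess q s := by
  rw [minGuess, minGuess, initSeg_eq_initSeg_iff.2 h]

lemma primrec_minGuess {α : Type*} [Primcodable α] {g : α → ℕ → ℕ} {s : α → ℕ}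
    (hg : Primrec₂ g) (hs : Primrec s) : Primrec fun x => minGuess (g x) (s x) :=
  primrec_leastRemaining.comp (Primrec.list_map (Primrec.list_range.comp hs) hg)

lemma eventually_minGuess_eq_sInf {p : Baire} {A : Set ℕ} (hpA : repClosedNat p A)
    (hA : A.Nonempty) : ∀ᶠ s in atTop, minGuess p s = sInf A := by
  have hcover : ∀ᶠ s in atTop, ∀ j ∈ Set.Iio (sInf A), j + 1 ∈ initSeg p s := by
    refine (eventually_all_finite (Set.finite_Iio _)).2 fun j hj => ?_
    obtain ⟨i, hi⟩ := not_not.1 ((hpA j).not.1 (Nat.notMem_of_lt_sInf hj))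
    filter_upwards [eventually_gt_atTop i] with s hs using mem_initSeg.2 ⟨i, hs, hi⟩
  filter_upwards [hcover] with s hs
  refine le_antisymm (leastRemaining_le fun h => ?_)
    (not_lt.1 fun h => leastRemaining_succ_notMem _ (hs _ h))
  obtain ⟨i, -, hi⟩ := mem_initSeg.1 h
  exact (hpA _).1 (Nat.sInf_mem hA) ⟨i, hi⟩

/-- `0` is included only to make the set nonempty, as `Bound` requires. -/
def changeStages {α : Type*} (a : ℕ → α) : Set ℕ := {m | m = 0 ∨ a m ≠ a (m - 1)}

lemma bddAbove_changeStages {α : Type*} {a : ℕ → α} {c : α} (hc : ∀ᶠ s in atTop, a s = c) :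
    BddAbove (changeStages a) := by
  obtain ⟨N, hN⟩ := hc.exists_forall_of_atTop
  refine ⟨N, fun m hm => le_of_not_gt fun hNm => ?_⟩
  rcases hm with rfl | hm
  · omega
  · exact hm ((hN m hNm.le).trans (hN (m - 1) (by omega)).symm)

lemma eq_of_mem_upperBounds_changeStages {α : Type*} {a : ℕ → α} {c : α}
    (hc : ∀ᶠ s in atTop, a s = c) {n : ℕ} (hn : n ∈ upperBounds (changeStages a)) : a n = c := by
  have hstable : ∀ k, a (n + k) = a n := fun k => by
    induction k with
    | zero => rfl
    | succ k ih =>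
      by_contra hne
      have := hn (Or.inr (by simpa [← add_assoc, ih] using hne) : n + (k + 1) ∈ changeStages a)
      omega
  obtain ⟨N, hN⟩ := hc.exists_forall_of_atTop
  rw [← hstable N, hN _ (Nat.le_add_left N n)]

def changeName (a : ℕ → ℕ) : Baire := fun s =>
  if s = 0 then 1 else if a s = a (s - 1) then 0 else s + 1

lemma repOpenNat_changeName (a : ℕ → ℕ) : repOpenNat (changeName a) (changeStages a) := by
  intro m
  constructor
  · rintro (rfl | h)
    · exact ⟨0, rfl⟩
    · have hm : m ≠ 0 := by rintro rfl; exact h rfl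
      exact ⟨m, by simp [changeName, hm, h]⟩
  · rintro ⟨i, hi⟩
    simp only [changeName] at hi
    split_ifs at hi with h0 h1
    · exact Or.inl (by omega)
    · obtain rfl : i = m := by omega
      exact Or.inr h1

lemma primrec_changeName {α : Type*} [Primcodable α] {a : α → ℕ → ℕ} (ha : Primrec₂ a) :
    Primrec₂ fun x s => changeName (a x) s :=
  Primrec.ite (Primrec.eq.comp Primrec.snd (Primrec.const 0)) (Primrec.const 1)
    (Primrec.ite (Primrec.eq.comp ha (ha.comp Primrec.fst (Primrec.nat_sub.comp Primrec.snd
      (Primrec.const 1)))) (Primrec.const 0) (Primrec.succ.comp Primrec.snd))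

lemma computableOn_changeName_minGuess {D : Set Baire} :
    ComputableOn (fun p => changeName (minGuess p)) D := by
  refine computableOn_of_causal (fun p q s h => ?_) (primrec_changeName
    (primrec_minGuess (Primrec.list_getI.comp (Primrec.fst.comp Primrec.fst) Primrec.snd)
      Primrec.snd))
  have hguess : ∀ t ≤ s, minGuess p t = minGuess q t :=
    fun t ht => minGuess_congr fun i hi => h i (by omega)
  simp only [changeName, hguess s le_rfl, hguess (s - 1) (Nat.sub_le s 1)]

lemma computableOn_minGuess_evens :
    ComputableOn (fun r _ => minGuess (evens r) (r 1)) Set.univ := by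
  refine computableOn_const_of_eventually (fun l => 2 * l.getI 1 + 2 ≤ l.length)
    (Primrec.nat_le.comp (Primrec.nat_add.comp (Primrec.nat_mul.comp (Primrec.const 2)
      (Primrec.list_getI.comp Primrec.id (Primrec.const 1))) (Primrec.const 2))
      Primrec.list_length)
    (fun l l' h hl => ?_) (fun p => ⟨2 * p 1 + 2, ?_⟩) (fun p q m hm hpq => ?_)
    (primrec_minGuess (Primrec.list_getI.comp Primrec.fst
      (Primrec.nat_mul.comp (Primrec.const 2) Primrec.snd))
      (Primrec.list_getI.comp Primrec.id (Primrec.const 1)))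
  · rw [← getI_eq_getI_of_prefix h (by omega)]
    exact hl.trans h.length_le
  · simp only [initSeg_length, initSeg_getI (show 1 < 2 * p 1 + 2 by omega), le_refl]
  · simp only [initSeg_length] at hm
    rw [initSeg_getI (by omega)] at hm
    rw [initSeg_eq_initSeg_iff] at hpq
    rw [← hpq 1 (by omega)]
    exact minGuess_congr fun i hi => hpq (2 * i) (by omega)

lemma CN_wRed_BoundN : WRed repClosedNat repNat repOpenNat repNat CN BoundN := by
  refine wRed_repNat_of_computable _ minGuess computableOn_changeName_minGuess
    computableOn_minGuess_evens fun p A hpA hA => ?_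
  have hconv := eventually_minGuess_eq_sInf hpA hA
  obtain ⟨N, hN⟩ := bddAbove_changeStages hconv
  refine ⟨changeStages (minGuess p), repOpenNat_changeName _, ⟨N, ⟨0, Or.inl rfl⟩, hN⟩,
    fun n hn => ?_⟩
  rw [eq_of_mem_upperBounds_changeStages hconv hn.2]
  exact Nat.sInf_mem hA

def upperBoundsName (p : Baire) : Baire := fun k =>
  if (Nat.unpair k).2 + 2 ≤ p (Nat.unpair k).1 then (Nat.unpair k).2 + 1 else 0

lemma repClosedNat_upperBoundsName {p : Baire} {U : Set ℕ} (hpU : repOpenNat p U) :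
    repClosedNat (upperBoundsName p) (upperBounds U) := by
  intro n
  rw [mem_upperBounds]
  constructor
  · rintro h ⟨k, hk⟩
    simp only [upperBoundsName] at hk
    split_ifs at hk with hle
    have := h (p k.unpair.1 - 1) ((hpU _).2 ⟨k.unpair.1, by omega⟩)
    omega
  · intro h m hm
    by_contra hlt
    obtain ⟨j, hj⟩ := (hpU m).1 hm
    exact h ⟨Nat.pair j n, by simp only [upperBoundsName, Nat.unpair_pair]; split_ifs <;> omega⟩

lemma computableOn_upperBoundsName {D : Set Baire} : ComputableOn upperBoundsName D :=
  computableOn_of_causal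
    (fun p q k h => by simp only [upperBoundsName, h _ (Nat.unpair_left_le k)])
    (Primrec.ite
      (Primrec.nat_le.comp
        (Primrec.nat_add.comp (Primrec.snd.comp (Primrec.unpair.comp Primrec.snd))
          (Primrec.const 2))
        (Primrec.list_getI.comp Primrec.fst (Primrec.fst.comp (Primrec.unpair.comp Primrec.snd))))
      (Primrec.succ.comp (Primrec.snd.comp (Primrec.unpair.comp Primrec.snd)))
      (Primrec.const 0))

lemma computableOn_const_apply_one : ComputableOn (fun r _ => r 1) Set.univ :=
  computableOn_const_of_eventually (fun l => 2 ≤ l.length)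
    (Primrec.nat_le.comp (Primrec.const 2) Primrec.list_length)
    (fun _ _ h hl => hl.trans h.length_le) (fun _ => ⟨2, by simp [initSeg_length]⟩)
    (fun p q m hm hpq => by
      simp only [initSeg_length] at hm
      exact initSeg_eq_initSeg_iff.1 hpq 1 (by omega))
    (Primrec.list_getI.comp Primrec.id (Primrec.const 1))

lemma BoundN_wRed_CN : WRed repOpenNat repNat repClosedNat repNat BoundN CN :=
  wRed_repNat_of_computable upperBoundsName (fun _ n => n) computableOn_upperBoundsName
    computableOn_const_apply_one fun _ U hpU ⟨n, hU, hn⟩ =>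
      ⟨upperBounds U, repClosedNat_upperBoundsName hpU, ⟨n, hn⟩, fun _ hm => ⟨hU, hm⟩⟩

/-- Closed choice on ℕ is Weihrauch equivalent to `Bound`. -/
theorem CN_equivW_Bound : WEquiv repClosedNat repNat repOpenNat repNat CN BoundN :=
  ⟨CN_wRed_BoundN, BoundN_wRed_CN⟩

end WL
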